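/- arXiv:1901.10090 — 3 statements merged into one kernel-verified Lean document; each statement's English description precedes it below -/
import Mathlib

section
/- For a prime p and integers a = p^k, b = p^{k-1} with k ≥ 1, in the Adem relation for P^a β P^b, the only index i with 0 ≤ i ≤ a/p for which both binomial coefficients C((p-1)(b-i), a-pi) and C((p-1)(b-i)-1, a-pi-1) are nonzero mod p is i = p^{k-1}; moreover for i = p^{k-1}, C((p-1)(b-i), a-pi) ≡ 1 (mod p) and C((p-1)(b-i)-1, a-pi-1) ≡ 0 (mod p). -/
/-- Integer binomial coefficient: `C(m, r)` is zero when `r < 0` or `r > m`. -/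
def ibinom (m r : ℤ) : ℤ :=
  if 0 ≤ r ∧ r ≤ m then (Nat.choose m.toNat r.toNat : ℤ) else 0

theorem stmt_1 (p k : ℕ) (hp : p.Prime) (hodd : Odd p) (hk : 1 ≤ k)
    (a b : ℤ) (ha : a = (p : ℤ) ^ k) (hb : b = (p : ℤ) ^ (k - 1)) :
    (∀ i : ℤ, 0 ≤ i → i ≤ a / p →
        (¬ (p : ℤ) ∣ ibinom ((p - 1) * (b - i)) (a - p * i) ∧
          ¬ (p : ℤ) ∣ ibinom ((p - 1) * (b - i) - 1) (a - p * i - 1)) →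
        i = (p : ℤ) ^ (k - 1)) ∧
      ibinom ((p - 1) * (b - (p : ℤ) ^ (k - 1))) (a - p * (p : ℤ) ^ (k - 1)) ≡ 1 [ZMOD p] ∧
      ibinom ((p - 1) * (b - (p : ℤ) ^ (k - 1)) - 1) (a - p * (p : ℤ) ^ (k - 1) - 1)
        ≡ 0 [ZMOD p] := by
  have hp2 : (2 : ℤ) ≤ p := by exact_mod_cast hp.two_le
  have hpk : a = p * b := by
    rw [ha, hb]
    conv_lhs => rw [show k = (k - 1) + 1 from (Nat.succ_pred_eq_of_pos hk).symm]
    ring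
  have hdiv : a / p = b := by
    rw [hpk]; exact Int.mul_ediv_cancel_left _ (by positivity)
  have e1 : (p - 1 : ℤ) * (b - (p : ℤ) ^ (k - 1)) = 0 := by rw [hb]; ring
  have e2 : a - p * (p : ℤ) ^ (k - 1) = 0 := by rw [hpk, hb]; ring
  refine ⟨?_, ?_, ?_⟩
  · intro i hi0 hi hnd
    rw [hdiv] at hi
    rcases eq_or_lt_of_le hi with h | h
    · rw [h, hb]
    · exfalso
      apply hnd.1
      have hbi : 1 ≤ b - i := by omega
      have hr : a - p * i = p * (b - i) := by rw [hpk]; ring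
      have hnle : ¬ (a - p * i ≤ (p - 1) * (b - i)) := by
        rw [hr]; nlinarith
      unfold ibinom
      rw [if_neg (by tauto)]
      exact dvd_zero _
  · rw [e1, e2]
    simp [ibinom, Int.ModEq]
  · rw [e1, e2]
    norm_num [ibinom]
end

section
/- Let p be an odd prime and let F = ZMod p. Let SL_2(F) act on the polynomial ring F[x,y] by linear substitutions on the variables x, y. Then the polynomials q = x^{p^2-p} + y^{p-1}·(x^{p-1} - y^{p-1})^{p-1} and r = x·y·(x^{p-1} - y^{p-1}) are invariant under this SL_2(F)-action. -/
open MvPolynomial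

/-!
Both `r = x ^ p * y - x * y ^ p` and `r * q = x ^ (p ^ 2) * y - x * y ^ (p ^ 2)` are Moore
determinants. A linear substitution multiplies `x ^ (p ^ k) * y - x * y ^ (p ^ k)` by its
determinant, because the `p ^ k`-th power map is additive in characteristic `p` and fixes `ZMod p`.
Hence `r` and `r * q` are `SL₂`-invariant, and so is `q`, as `r ≠ 0` in a domain.
-/

/-- Up to sign, the Moore determinant `det !![x, y; x ^ n, y ^ n]`. -/
def moore {R : Type*} [CommRing R] (n : ℕ) (x y : R) : R := x ^ n * y - x * y ^ n

section CommRing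

variable {R : Type*} [CommRing R]

lemma mul_mul_sub_pow_pred_eq_moore {n : ℕ} (hn : 1 ≤ n) (x y : R) :
    x * y * (x ^ (n - 1) - y ^ (n - 1)) = moore n x y := by
  obtain ⟨m, rfl⟩ := Nat.exists_eq_add_of_le' hn
  simp only [moore, Nat.add_sub_cancel]
  ring

variable (p : ℕ) [ExpChar R p]

lemma moore_linear_subst (k : ℕ) {a b c d : R} (ha : a ^ p ^ k = a) (hb : b ^ p ^ k = b)
    (hc : c ^ p ^ k = c) (hd : d ^ p ^ k = d) (x y : R) :
    moore (p ^ k) (a * x + c * y) (b * x + d * y) = (a * d - b * c) * moore (p ^ k) x y := by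
  simp only [moore, add_pow_expChar_pow, mul_pow, ha, hb, hc, hd]
  ring

lemma moore_mul_eq_moore_sq (x y : R) :
    moore p x y * (x ^ (p ^ 2 - p) + y ^ (p - 1) * (x ^ (p - 1) - y ^ (p - 1)) ^ (p - 1)) =
      moore (p ^ 2) x y := by
  obtain ⟨m, rfl⟩ := Nat.exists_eq_add_of_le' (expChar_pos R p)
  have hfrob : (x ^ m - y ^ m) ^ (m + 1) = x ^ ((m + 1) * m) - y ^ ((m + 1) * m) := by
    rw [sub_pow_expChar, ← pow_mul, ← pow_mul, mul_comm]
  have hsq : (m + 1) ^ 2 = (m + 1) * m + m + 1 := by ring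
  rw [moore, moore, Nat.add_sub_cancel, hsq,
    show (m + 1) * m + m + 1 - (m + 1) = (m + 1) * m by omega]
  linear_combination (x * y ^ (m + 1)) * hfrob

end CommRing

noncomputable def linSubst {R n : Type*} [CommSemiring R] [Fintype n] (g : Matrix n n R) :
    MvPolynomial n R →ₐ[R] MvPolynomial n R :=
  aeval fun i => ∑ j, C (g j i) * X j

lemma moore_X_ne_zero {K : Type*} [Field K] {n : ℕ} (hn : 1 < n) :
    moore n (X 0 : MvPolynomial (Fin 2) K) (X 1) ≠ 0 := by
  intro h
  apply FiniteField.X_pow_card_sub_X_ne_zero K hn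
  simpa [moore] using congrArg (aeval ![(Polynomial.X : Polynomial K), 1]) h

lemma linSubst_moore_X {p : ℕ} [Fact p.Prime] (A : Matrix (Fin 2) (Fin 2) (ZMod p)) (k : ℕ) :
    linSubst A (moore (p ^ k) (X 0) (X 1)) = C A.det * moore (p ^ k) (X 0) (X 1) := by
  have hfix (u : ZMod p) : (C u : MvPolynomial (Fin 2) (ZMod p)) ^ p ^ k = C u := by
    rw [← C_pow, ZMod.pow_card_pow]
  simp only [moore, linSubst, map_sub, map_mul, map_pow, aeval_X, Fin.sum_univ_two]
  rw [← moore, moore_linear_subst p k (hfix _) (hfix _) (hfix _) (hfix _), Matrix.det_fin_two,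
    C_sub, C_mul, C_mul, moore]

lemma linSubst_moore_X_of_det_eq_one {p : ℕ} [Fact p.Prime]
    (g : Matrix.SpecialLinearGroup (Fin 2) (ZMod p)) (k : ℕ) :
    linSubst (g : Matrix (Fin 2) (Fin 2) (ZMod p)) (moore (p ^ k) (X 0) (X 1)) =
      moore (p ^ k) (X 0) (X 1) := by
  rw [linSubst_moore_X, g.det_coe, C_1, one_mul]

theorem stmt_10_general (p : ℕ) (hp : p.Prime)
    (q r : MvPolynomial (Fin 2) (ZMod p))
    (hq : q = X 0 ^ (p ^ 2 - p) + X 1 ^ (p - 1) * (X 0 ^ (p - 1) - X 1 ^ (p - 1)) ^ (p - 1))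
    (hr : r = X 0 * X 1 * (X 0 ^ (p - 1) - X 1 ^ (p - 1)))
    (g : Matrix.SpecialLinearGroup (Fin 2) (ZMod p)) :
    aeval (fun i : Fin 2 => ∑ j : Fin 2, C ((g : Matrix (Fin 2) (Fin 2) (ZMod p)) j i) * X j) q = q ∧
    aeval (fun i : Fin 2 => ∑ j : Fin 2, C ((g : Matrix (Fin 2) (Fin 2) (ZMod p)) j i) * X j) r = r := by
  have : Fact p.Prime := ⟨hp⟩
  change linSubst _ q = q ∧ linSubst _ r = r
  have hr' : r = moore p (X 0) (X 1) := by rw [hr, mul_mul_sub_pow_pred_eq_moore hp.one_le]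
  have hrq : r * q = moore (p ^ 2) (X 0) (X 1) := by rw [hr', hq, moore_mul_eq_moore_sq]
  have hr_inv : linSubst (g : Matrix (Fin 2) (Fin 2) (ZMod p)) r = r := by
    simpa [← hr'] using linSubst_moore_X_of_det_eq_one g 1
  have hr_ne : r ≠ 0 := hr' ▸ moore_X_ne_zero hp.one_lt
  refine ⟨mul_left_cancel₀ hr_ne ?_, hr_inv⟩
  rw [hrq, ← linSubst_moore_X_of_det_eq_one g 2, ← hrq, map_mul, hr_inv]

theorem stmt_10 (p : ℕ) (hp : p.Prime) (hodd : Odd p)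
    (q r : MvPolynomial (Fin 2) (ZMod p))
    (hq : q = X 0 ^ (p ^ 2 - p) + X 1 ^ (p - 1) * (X 0 ^ (p - 1) - X 1 ^ (p - 1)) ^ (p - 1))
    (hr : r = X 0 * X 1 * (X 0 ^ (p - 1) - X 1 ^ (p - 1)))
    (g : Matrix.SpecialLinearGroup (Fin 2) (ZMod p)) :
    aeval (fun i : Fin 2 => ∑ j : Fin 2, C ((g : Matrix (Fin 2) (Fin 2) (ZMod p)) j i) * X j) q = q ∧
    aeval (fun i : Fin 2 => ∑ j : Fin 2, C ((g : Matrix (Fin 2) (Fin 2) (ZMod p)) j i) * X j) r = r :=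
  stmt_10_general p hp q r hq hr g
end

section
/- Let p be a prime and F = ZMod p. In the polynomial ring F[x,y], for every k ≥ 0 the element r_k := x^{p^{k+1}}·y - x·y^{p^{k+1}} is nonzero, and the elements r_0 and r_1 are algebraically independent over F. -/
open MvPolynomial Finset

namespace Stmt17Aux
variable {F : Type*} [CommRing F]

noncomputable def f2 (a b : ℕ) : Fin 2 →₀ ℕ := Finsupp.single 0 a + Finsupp.single 1 b

lemma f2_apply0 (a b : ℕ) : f2 a b 0 = a := by simp [f2]
lemma f2_apply1 (a b : ℕ) : f2 a b 1 = b := by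
  simp [f2, Finsupp.single_apply]
lemma f2_add (a b c d : ℕ) : f2 a b + f2 c d = f2 (a+c) (b+d) := by
  ext x; fin_cases x <;> simp [f2_apply0, f2_apply1, Finsupp.add_apply]
lemma f2_smul (n a b : ℕ) : n • f2 a b = f2 (n*a) (n*b) := by
  ext x; fin_cases x <;> simp [Finsupp.smul_apply, f2_apply0, f2_apply1]
lemma f2_inj {a b c d : ℕ} (h : f2 a b = f2 c d) : a = c ∧ b = d := by
  constructor
  · have := DFunLike.congr_fun h (0 : Fin 2); simpa [f2_apply0] using this
  · have := DFunLike.congr_fun h (1 : Fin 2); simpa [f2_apply1] using this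

lemma eq_of_components {d d' : Fin 2 →₀ ℕ} (h0 : d 0 = d' 0) (h1 : d 1 = d' 1) : d = d' := by
  ext x; fin_cases x <;> assumption

lemma binom_eq (q : ℕ) :
    (X 0 ^ q * X 1 - X 0 * X 1 ^ q : MvPolynomial (Fin 2) F)
      = monomial (f2 q 1) 1 + monomial (f2 1 q) (-1) := by
  rw [sub_eq_add_neg]
  congr 1
  · rw [X_pow_eq_monomial, ← pow_one (X 1 : MvPolynomial (Fin 2) F), X_pow_eq_monomial,
      monomial_mul, one_mul]; rfl
  · rw [← pow_one (X 0 : MvPolynomial (Fin 2) F), X_pow_eq_monomial, X_pow_eq_monomial,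
      monomial_mul, one_mul, ← map_neg]; rfl

lemma key_arith {q Q i j i' j' s t : ℕ} (hq : 2 ≤ q) (hQ : q < Q)
    (hA : i' * q + j' * Q ≤ i * q + j * Q) (hs : s ≤ i') (ht : t ≤ j')
    (h1 : s * q + (i' - s) + (t * Q + (j' - t)) = i * q + j * Q)
    (h2 : s + (i' - s) * q + (t + (j' - t) * Q) = i + j) :
    s = i ∧ t = j ∧ i' = i ∧ j' = j := by
  obtain ⟨a, rfl⟩ : ∃ a, i' = s + a := ⟨i' - s, by omega⟩
  obtain ⟨b, rfl⟩ : ∃ b, j' = t + b := ⟨j' - t, by omega⟩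
  simp only [Nat.add_sub_cancel_left] at h1 h2 hA
  have hab : a = 0 ∧ b = 0 := by
    have h3 : (s + a) * q + (t + b) * Q = s * q + a * q + t * Q + b * Q := by ring
    have h4 : a + a ≤ a * q := by calc a + a = a * 2 := by ring
                                      _ ≤ a * q := Nat.mul_le_mul_left a hq
    have h5 : b + b ≤ b * Q := by
      calc b + b = b * 2 := by ring
        _ ≤ b * Q := Nat.mul_le_mul_left b (by omega)
    have h6 : a * q + b * Q ≤ a + b := by omega
    omega
  obtain ⟨rfl, rfl⟩ := hab
  simp only [add_zero, zero_mul] at h1 h2 ⊢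
  have e1 : (s : ℤ) * q + t * Q = i * q + j * Q := by exact_mod_cast h1
  have e2 : (s : ℤ) + t = i + j := by exact_mod_cast h2
  have key : ((t : ℤ) - j) * ((Q : ℤ) - q) = 0 := by linear_combination e1 - (q : ℤ) * e2
  rcases mul_eq_zero.mp key with h | h
  · have ht' : t = j := by omega
    subst ht'
    have : s = i := by omega
    tauto
  · exfalso; have : (q : ℤ) < Q := by exact_mod_cast hQ
    omega

noncomputable def G (q Q i j : ℕ) : MvPolynomial (Fin 2) F :=
  (X 0 ^ q * X 1 - X 0 * X 1 ^ q) ^ i * (X 0 ^ Q * X 1 - X 0 * X 1 ^ Q) ^ j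

lemma coeff_G (q Q i j i' j' : ℕ) (hq : 2 ≤ q) (hQ : q < Q)
    (hA : i' * q + j' * Q ≤ i * q + j * Q) :
    coeff (f2 (i * q + j * Q) (i + j)) (G q Q i' j' : MvPolynomial (Fin 2) F)
      = if i' = i ∧ j' = j then 1 else 0 := by
  rw [G, binom_eq, binom_eq, add_pow, add_pow, Finset.sum_mul_sum, coeff_sum]
  simp only [coeff_sum, ← C_eq_coe_nat, C_apply, monomial_pow, monomial_mul, one_pow,
    f2_smul, f2_add, mul_one, add_zero, coeff_monomial]
  by_cases hij : i' = i ∧ j' = j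
  · obtain ⟨rfl, rfl⟩ := hij
    rw [if_pos ⟨rfl, rfl⟩,
      Finset.sum_eq_single_of_mem i' (self_mem_range_succ i')]
    · rw [Finset.sum_eq_single_of_mem j' (self_mem_range_succ j')]
      · rw [if_pos (by simp), Nat.sub_self, Nat.sub_self]
        simp
      · intro t ht htne
        rw [if_neg]
        intro hE
        obtain ⟨h1, h2⟩ := f2_inj hE
        obtain ⟨-, rfl, -, -⟩ := key_arith hq hQ le_rfl le_rfl
          (Finset.mem_range_succ_iff.mp ht) h1 h2
        exact htne rfl
    · intro s hs hsne
      apply Finset.sum_eq_zero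
      intro t ht
      rw [if_neg]
      intro hE
      obtain ⟨h1, h2⟩ := f2_inj hE
      obtain ⟨rfl, -, -, -⟩ := key_arith hq hQ le_rfl
        (Finset.mem_range_succ_iff.mp hs) (Finset.mem_range_succ_iff.mp ht) h1 h2
      exact hsne rfl
  · rw [if_neg hij]
    apply Finset.sum_eq_zero
    intro s hs
    apply Finset.sum_eq_zero
    intro t ht
    rw [if_neg]
    intro hE
    obtain ⟨h1, h2⟩ := f2_inj hE
    obtain ⟨-, -, h3, h4⟩ := key_arith hq hQ hA
      (Finset.mem_range_succ_iff.mp hs) (Finset.mem_range_succ_iff.mp ht) h1 h2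
    exact hij ⟨h3, h4⟩

end Stmt17Aux

open Stmt17Aux in
theorem stmt_17 (p : ℕ) (hp : p.Prime)
    (r : ℕ → MvPolynomial (Fin 2) (ZMod p))
    (hr : ∀ k, r k = X 0 ^ p ^ (k + 1) * X 1 - X 0 * X 1 ^ p ^ (k + 1)) :
    (∀ k, r k ≠ 0) ∧ AlgebraicIndependent (ZMod p) ![r 0, r 1] := by
  haveI : Fact p.Prime := ⟨hp⟩
  have hp2 : 2 ≤ p := hp.two_le
  constructor
  · intro k hk0
    have h1 : coeff (f2 (p ^ (k+1)) 1) (r k) = 1 := by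
      rw [hr k, binom_eq, coeff_add, coeff_monomial, coeff_monomial,
        if_pos rfl, if_neg, add_zero]
      intro h
      have := (f2_inj h).1
      have : 2 ≤ p ^ (k+1) := le_trans hp2 (Nat.le_self_pow (by omega) p)
      omega
    rw [hk0] at h1
    simp at h1
  · rw [algebraicIndependent_iff]
    intro P hP
    by_contra hne
    have hsup : P.support.Nonempty :=
      Finset.nonempty_iff_ne_empty.mpr (fun h => hne (support_eq_empty.mp h))
    obtain ⟨d0, hd0, hmax⟩ := P.support.exists_max_image
      (fun d => d 0 * p + d 1 * p ^ 2) hsup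
    have hQ : p < p ^ 2 := by nlinarith
    have heval : aeval ![r 0, r 1] P
        = ∑ d ∈ P.support, C (coeff d P) * G p (p ^ 2) (d 0) (d 1) := by
      rw [aeval_def, eval₂_eq']
      apply Finset.sum_congr rfl
      intro d _
      rw [algebraMap_eq]
      congr 1
      rw [Fin.prod_univ_two, G]
      simp only [Matrix.cons_val_zero, Matrix.cons_val_one, Matrix.head_cons, hr 0, hr 1]
      norm_num
    have hco : coeff (f2 (d0 0 * p + d0 1 * p ^ 2) (d0 0 + d0 1)) (aeval ![r 0, r 1] P)
        = coeff d0 P := by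
      rw [heval, coeff_sum]
      rw [Finset.sum_eq_single_of_mem d0 hd0]
      · rw [coeff_C_mul, coeff_G _ _ _ _ _ _ hp2 hQ (hmax d0 hd0), if_pos ⟨rfl, rfl⟩, mul_one]
      · intro d hd hdne
        rw [coeff_C_mul, coeff_G _ _ _ _ _ _ hp2 hQ (hmax d hd), if_neg, mul_zero]
        rintro ⟨h0, h1⟩
        exact hdne (eq_of_components h0 h1)
    rw [hP] at hco
    simp only [coeff_zero] at hco
    exact (mem_support_iff.mp hd0) hco.symm
end
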